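/- arXiv:2601.07021 — 2 statements merged into one kernel-verified Lean document; each statement's English description precedes it below -/
import Mathlib

section
/- Let f : ℝ^n → ℝ^n be of the form f(Θ) = W(Θ - γ G(Θ)), where W is a symmetric doubly stochastic matrix (so its operator norm is at most 1), G is differentiable with Jacobian everywhere symmetric and satisfying μI ⪯ DG(Θ) ⪯ LI for constants 0 < μ ≤ L, and 0 < γ ≤ 1/L. Then f is Lipschitz with constant (1 - γμ), i.e., ‖f(Θ) - f(Θ')‖ ≤ (1 - γμ)‖Θ - Θ'‖ for all Θ, Θ'. -/
open scoped RealInnerProductSpace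

section Aux

variable {E : Type*} [NormedAddCommGroup E] [InnerProductSpace ℝ E] [CompleteSpace E]

lemma pos_op_cauchy_schwarz (A : E →L[ℝ] E) (hA : IsSelfAdjoint A)
    (hpos : ∀ v, 0 ≤ ⟪A v, v⟫) (u v : E) :
    ⟪A u, v⟫ ^ 2 ≤ ⟪A u, u⟫ * ⟪A v, v⟫ := by
  have hsym : ∀ a b : E, ⟪A a, b⟫ = ⟪a, A b⟫ := by
    intro a b
    conv_lhs => rw [← hA.adjoint_eq]
    exact ContinuousLinearMap.adjoint_inner_left A b a
  have key : ∀ t : ℝ, 0 ≤ ⟪A v, v⟫ * (t * t) + (2 * ⟪A u, v⟫) * t + ⟪A u, u⟫ := by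
    intro t
    have h0 := hpos (u + t • v)
    have hvu : ⟪A v, u⟫ = ⟪A u, v⟫ := by
      rw [hsym v u, real_inner_comm]
    simp only [map_add, map_smul, inner_add_left, inner_add_right, inner_smul_left,
      inner_smul_right, conj_trivial] at h0
    rw [hvu] at h0
    nlinarith [h0]
  have hd := discrim_le_zero key
  rw [discrim] at hd
  nlinarith [hd]

lemma pos_op_norm_bound (A : E →L[ℝ] E) (hA : IsSelfAdjoint A) (c : ℝ) (hc : 0 ≤ c)
    (hpos : ∀ v, 0 ≤ ⟪A v, v⟫) (hub : ∀ v, ⟪A v, v⟫ ≤ c * ‖v‖ ^ 2) (v : E) :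
    ‖A v‖ ≤ c * ‖v‖ := by
  rcases eq_or_ne (A v) 0 with h | h
  · rw [h, norm_zero]; positivity
  · have h1 : ⟪A v, A v⟫ ^ 2 ≤ ⟪A v, v⟫ * ⟪A (A v), A v⟫ := pos_op_cauchy_schwarz A hA hpos v (A v)
    have h2 : ⟪A v, v⟫ ≤ c * ‖v‖ ^ 2 := hub v
    have h3 : ⟪A (A v), A v⟫ ≤ c * ‖A v‖ ^ 2 := hub (A v)
    have h4 : ⟪A v, A v⟫ = ‖A v‖ ^ 2 := real_inner_self_eq_norm_sq _
    have h5 : 0 < ‖A v‖ := norm_pos_iff.mpr h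
    have h6 : 0 ≤ ⟪A v, v⟫ := hpos v
    have h7 : 0 ≤ ⟪A (A v), A v⟫ := hpos (A v)
    have hmul : ⟪A v, v⟫ * ⟪A (A v), A v⟫ ≤ (c * ‖v‖ ^ 2) * (c * ‖A v‖ ^ 2) :=
      mul_le_mul h2 h3 h7 (by positivity)
    have key : ‖A v‖ ^ 2 ≤ (c * ‖v‖) ^ 2 := by nlinarith [h1, h4, h5]
    have := pow_le_pow_iff_left₀ (norm_nonneg (A v)) (by positivity : (0:ℝ) ≤ c * ‖v‖)
      (two_ne_zero)
    exact this.mp key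

end Aux

/-- One-step contraction of deterministic decentralized gradient descent:
if `W` is symmetric with operator norm at most 1, `G` is differentiable with
symmetric Jacobian satisfying `μ I ⪯ DG(Θ) ⪯ L I`, and `0 < γ ≤ 1/L`, then
`Θ ↦ W (Θ - γ G Θ)` is `(1 - γ μ)`-Lipschitz. -/
theorem dgd_one_step_contraction (n : ℕ)
    (W : EuclideanSpace ℝ (Fin n) →L[ℝ] EuclideanSpace ℝ (Fin n))
    (G : EuclideanSpace ℝ (Fin n) → EuclideanSpace ℝ (Fin n))
    (DG : EuclideanSpace ℝ (Fin n) →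
      (EuclideanSpace ℝ (Fin n) →L[ℝ] EuclideanSpace ℝ (Fin n)))
    (μ L γ : ℝ)
    (hW_sym : IsSelfAdjoint W) (hW_norm : ‖W‖ ≤ 1)
    (hG : ∀ Θ, HasFDerivAt G (DG Θ) Θ)
    (hDG_sym : ∀ Θ, IsSelfAdjoint (DG Θ))
    (hDG_lb : ∀ Θ v, μ * ‖v‖ ^ 2 ≤ ⟪(DG Θ) v, v⟫)
    (hDG_ub : ∀ Θ v, ⟪(DG Θ) v, v⟫ ≤ L * ‖v‖ ^ 2)
    (hμ : 0 < μ) (hμL : μ ≤ L) (hγ0 : 0 < γ) (hγL : γ ≤ 1 / L) :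
    ∀ Θ Θ' : EuclideanSpace ℝ (Fin n),
      ‖W (Θ - γ • G Θ) - W (Θ' - γ • G Θ')‖ ≤ (1 - γ * μ) * ‖Θ - Θ'‖ := by
  intro Θ Θ'
  have hL : 0 < L := lt_of_lt_of_le hμ hμL
  have hγL' : γ * L ≤ 1 := by rw [le_div_iff₀ hL] at hγL; exact hγL
  have hc : 0 ≤ 1 - γ * μ := by nlinarith
  set h : EuclideanSpace ℝ (Fin n) → EuclideanSpace ℝ (Fin n) :=
    fun x => x - γ • G x with hh
  set A : EuclideanSpace ℝ (Fin n) →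
      (EuclideanSpace ℝ (Fin n) →L[ℝ] EuclideanSpace ℝ (Fin n)) :=
    fun x => ContinuousLinearMap.id ℝ (EuclideanSpace ℝ (Fin n)) - γ • DG x with hA
  have hderiv : ∀ x, HasFDerivAt h (A x) x := fun x =>
    (hasFDerivAt_id x).sub ((hG x).const_smul γ)
  have hid : IsSelfAdjoint (ContinuousLinearMap.id ℝ (EuclideanSpace ℝ (Fin n))) := by
    rw [← ContinuousLinearMap.one_def]
    exact IsSelfAdjoint.one _
  have hAsym : ∀ x, IsSelfAdjoint (A x) := by
    intro x
    rw [ContinuousLinearMap.isSelfAdjoint_iff_isSymmetric] at hid ⊢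
    have hDGs := (hDG_sym x)
    rw [ContinuousLinearMap.isSelfAdjoint_iff_isSymmetric] at hDGs
    intro a b
    simp only [hA, ContinuousLinearMap.coe_sub, ContinuousLinearMap.coe_smul,
      LinearMap.sub_apply, LinearMap.smul_apply, inner_sub_left, inner_sub_right,
      inner_smul_left, inner_smul_right, conj_trivial]
    rw [hid a b, hDGs a b]
  have hn : ∀ x v, ⟪A x v, v⟫ = ‖v‖ ^ 2 - γ * ⟪DG x v, v⟫ := by
    intro x v
    simp only [hA, ContinuousLinearMap.sub_apply, ContinuousLinearMap.smul_apply,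
      ContinuousLinearMap.id_apply, inner_sub_left, real_inner_smul_left,
      real_inner_self_eq_norm_sq]
  have hApos : ∀ x v, 0 ≤ ⟪A x v, v⟫ := by
    intro x v
    have := hDG_ub x v
    rw [hn]
    nlinarith
  have hAub : ∀ x v, ⟪A x v, v⟫ ≤ (1 - γ * μ) * ‖v‖ ^ 2 := by
    intro x v
    have := hDG_lb x v
    rw [hn]
    nlinarith
  have hAnorm : ∀ x, ‖A x‖ ≤ 1 - γ * μ := by
    intro x
    exact (A x).opNorm_le_bound hc
      (fun v => pos_op_norm_bound (A x) (hAsym x) _ hc (hApos x) (hAub x) v)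
  have hlip : ‖h Θ - h Θ'‖ ≤ (1 - γ * μ) * ‖Θ - Θ'‖ := by
    have := (convex_univ (𝕜 := ℝ) (E := EuclideanSpace ℝ (Fin n))).norm_image_sub_le_of_norm_hasFDerivWithin_le
      (f := h) (f' := A) (fun x _ => (hderiv x).hasFDerivWithinAt)
      (fun x _ => hAnorm x) (Set.mem_univ Θ') (Set.mem_univ Θ)
    simpa using this
  calc ‖W (Θ - γ • G Θ) - W (Θ' - γ • G Θ')‖
      = ‖W (h Θ - h Θ')‖ := by rw [← map_sub]
    _ ≤ ‖W‖ * ‖h Θ - h Θ'‖ := W.le_opNorm _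
    _ ≤ 1 * ((1 - γ * μ) * ‖Θ - Θ'‖) :=
        mul_le_mul hW_norm hlip (norm_nonneg _) (by linarith [norm_nonneg W])
    _ = (1 - γ * μ) * ‖Θ - Θ'‖ := one_mul _
end

section
/- Let S : ℝ^n → ℝ^n be μ-strongly monotone and L-co-coercive with S(Θ★) = 0, let W have ‖W‖₂ ≤ 1 and W Θ★ = Θ★, let ε be a random vector field with E[ε(Θ)] = 0, E‖ε(Θ★)‖² ≤ τ², and such that S + ε is almost surely L-co-coercive. Then for the update Θ' = W(Θ - γ(S(Θ) + ε(Θ))) with 0 < γ < 1/L, one has E‖Θ' - Θ★‖² ≤ (1 - 2γμ(1 - Lγ))‖Θ - Θ★‖² + 2τ²γ². -/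
open MeasureTheory
open scoped RealInnerProductSpace ProbabilityTheory

set_option maxHeartbeats 1000000 in
/-- One-step mean-squared contraction of DSGD toward the fixed point: for a
μ-strongly monotone, L-co-coercive operator `S` with `S(Θ★) = 0`, a matrix
`W` with `‖W‖₂ ≤ 1` and `WΘ★ = Θ★`, and a zero-mean noise field `ε` with
second moment at most `τ²` at `Θ★` such that `S + ε` is a.s. L-co-coercive,
the update `Θ' = W(Θ - γ(S(Θ) + ε(Θ)))` with `0 < γ < 1/L` satisfies
`E‖Θ' - Θ★‖² ≤ (1 - 2γμ(1 - Lγ))‖Θ - Θ★‖² + 2τ²γ²`. -/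
theorem dsgd_one_step_mean_square_contraction (n : ℕ) (Ω : Type*)
    [MeasureSpace Ω] [IsProbabilityMeasure (ℙ : Measure Ω)]
    (S : EuclideanSpace ℝ (Fin n) → EuclideanSpace ℝ (Fin n))
    (W : EuclideanSpace ℝ (Fin n) →L[ℝ] EuclideanSpace ℝ (Fin n))
    (ε : Ω → EuclideanSpace ℝ (Fin n) → EuclideanSpace ℝ (Fin n))
    (Θstar : EuclideanSpace ℝ (Fin n))
    (μ L γ τ : ℝ) (hμ : 0 < μ) (hμL : μ ≤ L)
    (hmono : ∀ Θ Θ' : EuclideanSpace ℝ (Fin n),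
      μ * ‖Θ - Θ'‖ ^ 2 ≤ ⟪S Θ - S Θ', Θ - Θ'⟫)
    (hcoco_as : ∀ᵐ ω ∂ℙ, ∀ Θ Θ' : EuclideanSpace ℝ (Fin n),
      ‖(S Θ + ε ω Θ) - (S Θ' + ε ω Θ')‖ ^ 2 ≤
        L * ⟪(S Θ + ε ω Θ) - (S Θ' + ε ω Θ'), Θ - Θ'⟫)
    (hSstar : S Θstar = 0) (hWstar : W Θstar = Θstar)
    (hW : ‖W‖ ≤ 1)
    (hε_int : ∀ Θ, Integrable (fun ω => ε ω Θ) ℙ)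
    (hε_mean : ∀ Θ, (∫ ω, ε ω Θ ∂ℙ) = 0)
    (hε_sq_int : Integrable (fun ω => ‖ε ω Θstar‖ ^ 2) ℙ)
    (hε_mom : (∫ ω, ‖ε ω Θstar‖ ^ 2 ∂ℙ) ≤ τ ^ 2)
    (hγ0 : 0 < γ) (hγ : γ < 1 / L) :
    ∀ Θ : EuclideanSpace ℝ (Fin n),
      (∫ ω, ‖W (Θ - γ • (S Θ + ε ω Θ)) - Θstar‖ ^ 2 ∂ℙ) ≤
        (1 - 2 * γ * μ * (1 - L * γ)) * ‖Θ - Θstar‖ ^ 2 + 2 * τ ^ 2 * γ ^ 2 := by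
  intro Θ
  have hL : 0 < L := lt_of_lt_of_le hμ hμL
  have hγL : γ * L < 1 := by
    have := (lt_div_iff₀ hL).mp hγ
    linarith
  set x : EuclideanSpace ℝ (Fin n) := Θ - Θstar with hxdef
  set g : Ω → EuclideanSpace ℝ (Fin n) := fun ω => S Θ + ε ω Θ with hgdef
  set e : Ω → EuclideanSpace ℝ (Fin n) := fun ω => ε ω Θstar with hedef
  have hg_int : Integrable g ℙ := (integrable_const (S Θ)).add (hε_int Θ)
  have he_int : Integrable e ℙ := hε_int Θstar
  have hG_int : Integrable (fun ω => g ω - e ω) ℙ := hg_int.sub he_int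
  have hg_avg : (∫ ω, g ω ∂ℙ) = S Θ := by
    rw [hgdef, integral_add (integrable_const _) (hε_int Θ), hε_mean Θ, integral_const]
    simp
  have hG_avg : (∫ ω, (g ω - e ω) ∂ℙ) = S Θ := by
    rw [integral_sub hg_int he_int, hg_avg, hedef, hε_mean Θstar, sub_zero]
  have hIg_int : Integrable (fun ω => ⟪x, g ω⟫) ℙ := by
    have := (innerSL ℝ x).integrable_comp hg_int
    simpa using this
  have hIG_int : Integrable (fun ω => ⟪x, g ω - e ω⟫) ℙ := by
    have := (innerSL ℝ x).integrable_comp hG_int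
    simpa using this
  have hIg : (∫ ω, ⟪x, g ω⟫ ∂ℙ) = ⟪x, S Θ⟫ := by
    rw [integral_inner hg_int, hg_avg]
  have hIG : (∫ ω, ⟪x, g ω - e ω⟫ ∂ℙ) = ⟪x, S Θ⟫ := by
    rw [integral_inner hG_int, hG_avg]
  set h : Ω → ℝ := fun ω =>
    (‖x‖ ^ 2 - 2 * γ * ⟪x, g ω⟫ + 2 * γ ^ 2 * (L * ⟪x, g ω - e ω⟫)) + 2 * γ ^ 2 * ‖e ω‖ ^ 2
    with hhdef
  have h1_int : Integrable (fun ω => ‖x‖ ^ 2 - 2 * γ * ⟪x, g ω⟫) ℙ :=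
    (integrable_const _).sub (hIg_int.const_mul _)
  have h2_int : Integrable (fun ω => 2 * γ ^ 2 * (L * ⟪x, g ω - e ω⟫)) ℙ :=
    (hIG_int.const_mul L).const_mul _
  have h3_int : Integrable (fun ω => 2 * γ ^ 2 * ‖e ω‖ ^ 2) ℙ := hε_sq_int.const_mul _
  have hh_int : Integrable h ℙ := ((h1_int.add h2_int).add h3_int)
  -- pointwise a.e. bound
  have hptwise : ∀ᵐ ω ∂ℙ, ‖W (Θ - γ • (S Θ + ε ω Θ)) - Θstar‖ ^ 2 ≤ h ω := by
    filter_upwards [hcoco_as] with ω hc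
    have hc' : ‖g ω - e ω‖ ^ 2 ≤ L * ⟪x, g ω - e ω⟫ := by
      have := hc Θ Θstar
      rw [hSstar, zero_add] at this
      calc ‖g ω - e ω‖ ^ 2 ≤ L * ⟪g ω - e ω, x⟫ := this
        _ = L * ⟪x, g ω - e ω⟫ := by rw [real_inner_comm]
    have hnorm1 : ‖W (Θ - γ • g ω) - Θstar‖ ≤ ‖x - γ • g ω‖ := by
      have heq : W ((Θ - γ • g ω) - Θstar) = W (Θ - γ • g ω) - Θstar := by
        rw [map_sub, hWstar]
      rw [← heq]
      calc ‖W ((Θ - γ • g ω) - Θstar)‖ ≤ ‖W‖ * ‖(Θ - γ • g ω) - Θstar‖ :=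
            W.le_opNorm _
        _ ≤ 1 * ‖(Θ - γ • g ω) - Θstar‖ :=
            mul_le_mul_of_nonneg_right hW (norm_nonneg _)
        _ = ‖x - γ • g ω‖ := by rw [one_mul]; congr 1; rw [hxdef]; abel
    have hsq1 : ‖W (Θ - γ • g ω) - Θstar‖ ^ 2 ≤ ‖x - γ • g ω‖ ^ 2 :=
      pow_le_pow_left₀ (norm_nonneg _) hnorm1 2
    have hexp : ‖x - γ • g ω‖ ^ 2 = ‖x‖ ^ 2 - 2 * (γ * ⟪x, g ω⟫) + γ ^ 2 * ‖g ω‖ ^ 2 := by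
      rw [norm_sub_sq_real, real_inner_smul_right, norm_smul, mul_pow]
      simp [sq_abs]
    have hsplit : ‖g ω‖ ^ 2 ≤ 2 * ‖g ω - e ω‖ ^ 2 + 2 * ‖e ω‖ ^ 2 := by
      have htri : ‖g ω‖ ≤ ‖g ω - e ω‖ + ‖e ω‖ := by
        have := norm_add_le (g ω - e ω) (e ω)
        rwa [sub_add_cancel] at this
      nlinarith [htri, sq_nonneg (‖g ω - e ω‖ - ‖e ω‖), norm_nonneg (g ω),
        norm_nonneg (g ω - e ω), norm_nonneg (e ω)]
    show ‖W (Θ - γ • g ω) - Θstar‖ ^ 2 ≤ h ω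
    calc ‖W (Θ - γ • g ω) - Θstar‖ ^ 2 ≤ ‖x - γ • g ω‖ ^ 2 := hsq1
      _ = ‖x‖ ^ 2 - 2 * (γ * ⟪x, g ω⟫) + γ ^ 2 * ‖g ω‖ ^ 2 := hexp
      _ ≤ ‖x‖ ^ 2 - 2 * (γ * ⟪x, g ω⟫)
          + γ ^ 2 * (2 * ‖g ω - e ω‖ ^ 2 + 2 * ‖e ω‖ ^ 2) := by gcongr
      _ ≤ ‖x‖ ^ 2 - 2 * (γ * ⟪x, g ω⟫)
          + γ ^ 2 * (2 * (L * ⟪x, g ω - e ω⟫) + 2 * ‖e ω‖ ^ 2) := by gcongr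
      _ = h ω := by rw [hhdef]; ring
  -- integrate
  have hmain : (∫ ω, ‖W (Θ - γ • (S Θ + ε ω Θ)) - Θstar‖ ^ 2 ∂ℙ) ≤ ∫ ω, h ω ∂ℙ :=
    integral_mono_of_nonneg (Filter.Eventually.of_forall fun ω => by positivity)
      hh_int hptwise
  have hintval : (∫ ω, h ω ∂ℙ) =
      ‖x‖ ^ 2 - 2 * γ * ⟪x, S Θ⟫ + 2 * γ ^ 2 * (L * ⟪x, S Θ⟫)
        + 2 * γ ^ 2 * (∫ ω, ‖e ω‖ ^ 2 ∂ℙ) := by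
    have h12_int : Integrable (fun ω =>
        (‖x‖ ^ 2 - 2 * γ * ⟪x, g ω⟫) + 2 * γ ^ 2 * (L * ⟪x, g ω - e ω⟫)) ℙ :=
      h1_int.add h2_int
    rw [hhdef]
    rw [integral_add h12_int h3_int, integral_add h1_int h2_int,
      integral_sub (integrable_const _) (hIg_int.const_mul (2 * γ)),
      integral_const_mul, integral_const_mul, integral_const_mul, integral_const_mul,
      hIg, hIG, integral_const]
    simp
  have hA : μ * ‖x‖ ^ 2 ≤ ⟪x, S Θ⟫ := by
    have := hmono Θ Θstar
    rw [hSstar, sub_zero] at this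
    calc μ * ‖x‖ ^ 2 ≤ ⟪S Θ, x⟫ := this
      _ = ⟪x, S Θ⟫ := real_inner_comm _ _
  have hT : (∫ ω, ‖e ω‖ ^ 2 ∂ℙ) ≤ τ ^ 2 := hε_mom
  have hT0 : (0:ℝ) ≤ ∫ ω, ‖e ω‖ ^ 2 ∂ℙ :=
    integral_nonneg fun ω => by positivity
  refine le_trans hmain ?_
  rw [hintval]
  have hc0 : (0:ℝ) ≤ 2 * γ * (1 - γ * L) := by nlinarith
  have e3 : 2 * γ * (1 - γ * L) * (μ * ‖x‖ ^ 2) ≤ 2 * γ * (1 - γ * L) * ⟪x, S Θ⟫ :=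
    mul_le_mul_of_nonneg_left hA hc0
  have hT' : 2 * γ ^ 2 * (∫ ω, ‖e ω‖ ^ 2 ∂ℙ) ≤ 2 * γ ^ 2 * τ ^ 2 :=
    mul_le_mul_of_nonneg_left hT (by positivity)
  nlinarith [e3, hT']
end
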